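/- arXiv:0909.0053 — 2 statements merged into one kernel-verified Lean document; each statement's English description precedes it below -/
import Mathlib

section
/- If G, H ∈ 𝔾 have structural sets S and T respectively such that R_S(G) ≃ R_T(H), then σ(G) and σ(H) differ at most by N(G;S) ∪ N(H;T). -/
open scoped Classical

noncomputable section

/-- A finite weighted digraph with weights in the field `𝕎 = RatFunc ℂ` of complex
rational functions: a finite vertex set together with a weight function, where
weight `0` encodes the absence of an edge (no parallel edges, loops allowed). -/
structure WDigraph (V : Type*) [Fintype V] [DecidableEq V] where
  verts : Finset V
  w : V → V → RatFunc ℂ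

namespace WDigraph

variable {V : Type*} [Fintype V] [DecidableEq V]

/-- Membership in `𝔾`: all edges (nonzero weights) join vertices of `G`. -/
def Wf (G : WDigraph V) : Prop :=
  ∀ u v, G.w u v ≠ 0 → u ∈ G.verts ∧ v ∈ G.verts

/-- `det (M(G) - λ I)` as an element of `𝕎`. -/
def charDet (G : WDigraph V) : RatFunc ℂ :=
  Matrix.det (Matrix.of fun i j : G.verts =>
    G.w i.1 j.1 - if i = j then (RatFunc.X : RatFunc ℂ) else 0)

/-- The spectrum of `G`: the list (multiset) of complex solutions, with
multiplicity, of `det (M(G,λ) - λ I) = 0`. -/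
def spec (G : WDigraph V) : Multiset ℂ := G.charDet.num.roots

/-- Membership in `𝔾_π`: every adjacency matrix entry `p/q` has `π(p/q) = deg p - deg q ≤ 0`. -/
def PiNonpos (G : WDigraph V) : Prop :=
  ∀ u v, (G.w u v).num.degree ≤ (G.w u v).denom.degree

end WDigraph

/-- Two spectra (lists) differ at most by the set `N`: after removing all entries
with values in `N` they agree. -/
def SpecDiffAtMost (s₁ s₂ : Multiset ℂ) (N : Set ℂ) : Prop :=
  s₁.filter (fun z => z ∉ N) = s₂.filter (fun z => z ∉ N)

variable {V : Type*} [Fintype V] [DecidableEq V]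

/-- `S` is a structural set of `G`: `S` is a nonempty subset of the vertices, the
complement of `S` induces no cycles in `ℓ(G)` (i.e. no closed walk through
consecutive-distinct vertices all lying outside `S`), and no loop at a vertex
outside `S` has weight `λ`. -/
def IsStructuralSet (G : WDigraph V) (S : Finset V) : Prop :=
  S.Nonempty ∧ S ⊆ G.verts ∧
    (∀ v, ¬ Relation.TransGen
      (fun a b => a ∈ G.verts ∧ b ∈ G.verts ∧ a ∉ S ∧ b ∉ S ∧ a ≠ b ∧ G.w a b ≠ 0) v v) ∧
    ∀ v ∈ G.verts, v ∉ S → G.w v v ≠ RatFunc.X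

/-- `β` is a branch of `G` from `u` to `v` with respect to `S`: a path or cycle
from `u` to `v` in `G` all of whose interior vertices lie outside `S`. -/
def IsBranch (G : WDigraph V) (S : Finset V) (u v : V) (β : List V) : Prop :=
  u ∈ S ∧ v ∈ S ∧
    ∃ int : List V, β = u :: (int ++ [v]) ∧
      (∀ x ∈ int, x ∈ G.verts ∧ x ∉ S) ∧
      (u :: int).Nodup ∧ v ∉ int ∧
      List.Chain' (fun a b => G.w a b ≠ 0) β

/-- The branch product `𝒫_ω(β)` of a branch `β = v₁, …, v_m`. -/
def branchProd {V : Type*} (w : V → V → RatFunc ℂ) : List V → RatFunc ℂ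
  | [] => 0
  | [_] => 0
  | [a, b] => w a b
  | a :: b :: c :: rest => w a b * branchProd w (b :: c :: rest) / (RatFunc.X - w b b)

/-- The isospectral reduction `R_S(G)`: the graph on vertex set `S` whose weight
from `u` to `v` is the sum of the branch products of all branches from `u` to
`v` with respect to `S`. -/
def WDigraph.reduce (G : WDigraph V) (S : Finset V) : WDigraph V where
  verts := S
  w := fun u v => ∑ᶠ β ∈ {β : List V | IsBranch G S u v β}, branchProd G.w β

/-- The set `N(G;S)`: all `z ∈ ℂ` such that for some vertex `v` of `G` off `S`,
either `z = ω(e_vv)(z)` or `ω(e_vv)` is undefined at `z`. -/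
def NSet (G : WDigraph V) (S : Finset V) : Set ℂ :=
  {z | ∃ v ∈ G.verts, v ∉ S ∧
    ((RatFunc.X - G.w v v).num.eval z = 0 ∨ (G.w v v).denom.eval z = 0)}

/-- Isomorphism of weighted digraphs: a vertex bijection carrying edges to edges
and preserving weights. -/
def WDigraph.Isom {V₁ : Type*} [Fintype V₁] [DecidableEq V₁]
    {V₂ : Type*} [Fintype V₂] [DecidableEq V₂]
    (G : WDigraph V₁) (H : WDigraph V₂) : Prop :=
  ∃ ρ : G.verts ≃ H.verts, ∀ u v : G.verts, H.w (ρ u).1 (ρ v).1 = G.w u.1 v.1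

/-!
Eliminating a vertex `x ∉ S` by the Schur complement of its diagonal entry gives
`det (M(G) - λI) = (ω(e_xx) - λ) · det (M(R_{V∖x}(G)) - λI)`. Since `S̄` induces no cycles, some
`x ∈ S̄` receives no edge from the rest of `S̄`. For such `x`, the set `S` stays structural in
`R_{V∖x}(G)`, and reducing that graph onto `S` gives back `R_S(G)`: the branch product of a
branch of `R_{V∖x}(G)` is that of the same branch in `G` plus that of the branch detouring through
`x` right after its first vertex, and these account for all branches of `G` with nonzero product,
since a branch can enter `x` only from its first vertex. By induction,
`det (M(G) - λI) = ∏_{x ∉ S} (ω(e_xx) - λ) · det (M(R_S(G)) - λI)`. Off `N(G;S)` the prefactor has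
no zeros or poles, so it does not change the root multiplicities of the numerator there, and
isomorphic reductions have equal determinants.
-/

theorem Matrix.det_eq_mul_det_pivot {ι K : Type*} [Fintype ι] [DecidableEq ι] [Field K]
    (M : Matrix ι ι K) (i₀ : ι) (h : M i₀ i₀ ≠ 0) :
    M.det = M i₀ i₀ *
      (Matrix.of fun i j : {i // i ≠ i₀} => M i j - M i i₀ * M i₀ j / M i₀ i₀).det := by
  let _ : Unique {i // ¬i ≠ i₀} := ⟨⟨⟨i₀, not_not.2 rfl⟩⟩, fun i => Subtype.ext (not_not.1 i.2)⟩
  have h_default : ((default : {i // ¬i ≠ i₀}) : ι) = i₀ := rfl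
  let e := Equiv.sumCompl (· ≠ i₀)
  have hD : (M.submatrix e e).toBlocks₂₂ = Matrix.of fun _ _ => M i₀ i₀ := by
    ext i j
    simp [Matrix.toBlocks₂₂, e, not_not.1 i.2, not_not.1 j.2]
  have hDinv : (M.submatrix e e).toBlocks₂₂ * Matrix.of (fun _ _ => (M i₀ i₀)⁻¹) = 1 := by
    ext i j
    obtain rfl := Subsingleton.elim i j
    simp [hD, Matrix.mul_apply, h]
  let _ := invertibleOfRightInverse _ _ hDinv
  rw [← Matrix.det_submatrix_equiv_self e, ← Matrix.fromBlocks_toBlocks (M.submatrix e e),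
    Matrix.det_fromBlocks₂₂, invOf_eq_right_inv hDinv, hD, Matrix.det_unique]
  congr 2
  ext i j
  simp [Matrix.toBlocks₁₁, Matrix.toBlocks₁₂, Matrix.toBlocks₂₁, Matrix.mul_apply, e, h_default,
    div_eq_mul_inv]
  ring

namespace RatFunc

open Polynomial

variable {K : Type*} [Field K]

theorem rootMultiplicity_num_eq_zero_or_denom (f : RatFunc K) (z : K) :
    f.num.rootMultiplicity z = 0 ∨ f.denom.rootMultiplicity z = 0 := by
  have := aeval_ne_zero_of_isCoprime (isCoprime_num_denom f) z
  simp only [coe_aeval_eq_eval] at this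
  exact this.imp rootMultiplicity_eq_zero rootMultiplicity_eq_zero

/-- `f` is a unit of the local ring at `z`: it has neither a zero nor a pole there. -/
def IsUnitAt (f : RatFunc K) (z : K) : Prop :=
  f.num.eval z ≠ 0 ∧ f.denom.eval z ≠ 0

theorem isUnitAt_algebraMap {p : K[X]} {z : K} (hp : p.eval z ≠ 0) :
    (algebraMap K[X] (RatFunc K) p).IsUnitAt z := by
  simp [IsUnitAt, num_algebraMap, denom_algebraMap, hp]

theorem IsUnitAt.mul {f g : RatFunc K} {z : K} (hf : f.IsUnitAt z) (hg : g.IsUnitAt z) :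
    (f * g).IsUnitAt z := by
  refine ⟨fun h => ?_, fun h => ?_⟩
  · have := eval_eq_zero_of_dvd_of_eval_eq_zero (num_mul_dvd f g) h
    exact (mul_ne_zero hf.1 hg.1) (by simpa using this)
  · have := eval_eq_zero_of_dvd_of_eval_eq_zero (denom_mul_dvd f g) h
    exact (mul_ne_zero hf.2 hg.2) (by simpa using this)

theorem IsUnitAt.neg {f : RatFunc K} {z : K} (hf : f.IsUnitAt z) : (-f).IsUnitAt z := by
  rw [neg_eq_neg_one_mul, ← map_one (algebraMap K[X] (RatFunc K)), ← map_neg]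
  exact (isUnitAt_algebraMap (by simp)).mul hf

theorem isUnitAt_prod {ι : Type*} (s : Finset ι) {f : ι → RatFunc K} {z : K}
    (hf : ∀ i ∈ s, (f i).IsUnitAt z) : (∏ i ∈ s, f i).IsUnitAt z := by
  induction s using Finset.cons_induction with
  | empty => simpa using isUnitAt_algebraMap (p := 1) (z := z) (by simp)
  | cons i s hi ih =>
    rw [Finset.prod_cons]
    exact (hf i (Finset.mem_cons_self i s)).mul (ih fun j hj => hf j (Finset.mem_cons_of_mem hj))

theorem isUnitAt_X_sub {f : RatFunc K} {z : K} (hnum : (X - f).num.eval z ≠ 0)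
    (hdenom : f.denom.eval z ≠ 0) : (X - f).IsUnitAt z := by
  have hdvd : (X - f).denom ∣ f.denom := (denom_dvd (denom_ne_zero f)).2
    ⟨Polynomial.X * f.denom - f.num, by
      rw [map_sub, map_mul, sub_div, mul_div_cancel_right₀ _ (algebraMap_ne_zero (denom_ne_zero f)),
        num_div_denom, algebraMap_X]⟩
  exact ⟨hnum, fun h => hdenom (eval_eq_zero_of_dvd_of_eval_eq_zero hdvd h)⟩

theorem IsUnitAt.count_roots_num_mul {f : RatFunc K} {z : K} (hf : f.IsUnitAt z)
    (g : RatFunc K) : (f * g).num.roots.count z = g.num.roots.count z := by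
  rcases eq_or_ne g 0 with rfl | hg
  · simp
  have hf0 : f ≠ 0 := by rintro rfl; simp [IsUnitAt] at hf
  have key := congrArg (rootMultiplicity z) (num_denom_mul f g)
  rw [rootMultiplicity_mul, rootMultiplicity_mul, rootMultiplicity_mul, rootMultiplicity_mul,
    rootMultiplicity_eq_zero hf.1, rootMultiplicity_eq_zero hf.2] at key
  · rw [count_roots, count_roots]
    have := rootMultiplicity_num_eq_zero_or_denom (f * g) z
    have := rootMultiplicity_num_eq_zero_or_denom g z
    omega
  all_goals simp [hf0, hg, denom_ne_zero]

theorem filter_roots_num_mul {f : RatFunc K} {N : Set K} (hf : ∀ z ∉ N, f.IsUnitAt z)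
    (g : RatFunc K) :
    (f * g).num.roots.filter (· ∉ N) = g.num.roots.filter (· ∉ N) := by
  ext z
  simp only [Multiset.count_filter]
  split_ifs with hz
  · rfl
  · exact (hf z hz).count_roots_num_mul g

end RatFunc

/-- The interiors `int` of the branches `u :: (int ++ [v])`, minus the requirement that consecutive
vertices be joined by edges: without it the branch product vanishes anyway. -/
def IsBranchInterior (G : WDigraph V) (S : Finset V) (u v : V) (int : List V) : Prop :=
  (∀ x ∈ int, x ∈ G.verts ∧ x ∉ S) ∧ (u :: int).Nodup ∧ v ∉ int

theorem finite_setOf_isBranchInterior (G : WDigraph V) (S : Finset V) (u v : V) :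
    {int | IsBranchInterior G S u v int}.Finite :=
  (List.finite_length_le V (Fintype.card V)).subset fun _ h =>
    (List.nodup_cons.mp h.2.1).2.length_le_card

section branchProd

variable {α : Type*} {w w' : α → α → RatFunc ℂ}

theorem branchProd_cons_cons (w : α → α → RatFunc ℂ) (a b : α) {l : List α} (hl : l ≠ []) :
    branchProd w (a :: b :: l) = w a b * branchProd w (b :: l) / (RatFunc.X - w b b) := by
  obtain ⟨c, l, rfl⟩ := List.exists_cons_of_ne_nil hl
  rfl

theorem branchProd_eq_zero_of_not_chain :
    ∀ {l : List α}, ¬ l.IsChain (fun a b => w a b ≠ 0) → branchProd w l = 0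
  | [], _ | [_], _ => rfl
  | [a, b], h => by simpa [branchProd] using h
  | a :: b :: c :: l, h => by
    rw [List.isChain_cons_cons, not_and_or, not_not] at h
    rcases h with h | h
    · simp [branchProd, h]
    · simp [branchProd, branchProd_eq_zero_of_not_chain h]

theorem branchProd_congr :
    ∀ {l : List α}, (∀ a ∈ l.dropLast, ∀ b ∈ l, w' a b = w a b) →
      branchProd w' l = branchProd w l
  | [], _ | [_], _ => rfl
  | [a, b], h => h a (by simp) b (by simp)
  | a :: b :: c :: l, h => by
    have htail : ∀ x ∈ (b :: c :: l).dropLast, ∀ y ∈ b :: c :: l, w' x y = w x y :=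
      fun x hx y hy => h x (List.mem_cons_of_mem _ hx) y (List.mem_cons_of_mem _ hy)
    rw [branchProd, branchProd, branchProd_congr htail, h a (by simp) b (by simp),
      h b (by simp) b (by simp)]

end branchProd

namespace WDigraph

theorem ext {G H : WDigraph V} (hverts : G.verts = H.verts) (hw : G.w = H.w) :
    G = H := by
  cases G; cases H; congr

variable (G : WDigraph V) {S : Finset V} {u v : V}

theorem reduce_w_eq_zero (h : u ∉ S ∨ v ∉ S) : (G.reduce S).w u v = 0 := by
  have : {β | IsBranch G S u v β} = ∅ :=
    Set.eq_empty_of_forall_notMem fun β hβ => h.elim (· hβ.1) (· hβ.2.1)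
  simp only [reduce, this, finsum_mem_empty]

theorem reduce_w (hu : u ∈ S) (hv : v ∈ S) :
    (G.reduce S).w u v = ∑ᶠ int ∈ {int | IsBranchInterior G S u v int},
      branchProd G.w (u :: (int ++ [v])) := by
  have hinj : Set.InjOn (fun int => u :: (int ++ [v])) {int | IsBranchInterior G S u v int} :=
    fun a _ b _ h => List.append_cancel_right (List.cons.inj h).2
  rw [← finsum_mem_image hinj]
  refine finsum_mem_inter_support_eq' _ _ _ fun β hβ => ⟨?_, ?_⟩
  · rintro ⟨-, -, int, rfl, hint, hnd, hvint, -⟩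
    exact ⟨int, ⟨hint, hnd, hvint⟩, rfl⟩
  · rintro ⟨int, ⟨hint, hnd, hvint⟩, rfl⟩
    exact ⟨hu, hv, int, rfl, hint, hnd, hvint, not_not.1 (mt branchProd_eq_zero_of_not_chain hβ)⟩

theorem reduce_verts_w (hu : u ∈ G.verts) (hv : v ∈ G.verts) :
    (G.reduce G.verts).w u v = G.w u v := by
  have : {int | IsBranchInterior G G.verts u v int} = {[]} := by
    refine Set.eq_singleton_iff_unique_mem.2 ⟨⟨by simp, by simp, by simp⟩, fun int hint => ?_⟩
    exact List.eq_nil_iff_forall_not_mem.2 fun x hx => (hint.1 x hx).2 (hint.1 x hx).1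
  rw [reduce_w G hu hv, this, finsum_mem_singleton]
  rfl

theorem reduce_erase_w {x : V} (hx : x ∈ G.verts) (hu : u ∈ G.verts.erase x)
    (hv : v ∈ G.verts.erase x) :
    (G.reduce (G.verts.erase x)).w u v =
      G.w u v + G.w u x * G.w x v / (RatFunc.X - G.w x x) := by
  have : {int | IsBranchInterior G (G.verts.erase x) u v int} = {[], [x]} := by
    obtain ⟨hux, -⟩ := Finset.mem_erase.1 hu
    obtain ⟨hvx, -⟩ := Finset.mem_erase.1 hv
    ext int
    refine ⟨fun ⟨hint, hnd, _⟩ => ?_, ?_⟩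
    · have hrep : int = List.replicate int.length x := List.eq_replicate_iff.2 ⟨rfl, fun y hy =>
        not_not.1 fun hyx => (hint y hy).2 (Finset.mem_erase.2 ⟨hyx, (hint y hy).1⟩)⟩
      have hlen : int.length ≤ 1 := List.nodup_replicate.1 (hrep ▸ (List.nodup_cons.1 hnd).2)
      interval_cases h : int.length <;> simp_all
    · rintro (rfl | rfl)
      · simp [IsBranchInterior]
      · simp [IsBranchInterior, hx, hux, hvx]
  rw [reduce_w G hu hv, this, finsum_mem_pair (by simp)]
  rfl

theorem charDet_reduce_verts : (G.reduce G.verts).charDet = G.charDet := by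
  unfold charDet
  congr 2
  ext i j
  rw [reduce_verts_w G i.2 j.2]
  rfl

theorem charDet_eq_mul_charDet_reduce_erase {x : V} (hx : x ∈ G.verts)
    (hX : G.w x x ≠ RatFunc.X) :
    G.charDet = (G.w x x - RatFunc.X) * (G.reduce (G.verts.erase x)).charDet := by
  let x' : G.verts := ⟨x, hx⟩
  let e : {i : G.verts // i ≠ x'} ≃ G.verts.erase x :=
    { toFun i := ⟨i.1.1, Finset.mem_erase.2 ⟨fun h => i.2 (Subtype.ext h), i.1.2⟩⟩
      invFun j := ⟨⟨j.1, Finset.mem_of_mem_erase j.2⟩,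
        fun h => Finset.ne_of_mem_erase j.2 (congrArg Subtype.val h)⟩
      left_inv _ := rfl
      right_inv _ := rfl }
  unfold charDet
  rw [Matrix.det_eq_mul_det_pivot _ x' (by simpa [sub_eq_zero] using hX),
    ← Matrix.det_reindex_self e]
  simp only [Matrix.of_apply, if_true]
  congr 2
  ext i j
  have hij : (e.symm i : G.verts) = e.symm j ↔ i = j :=
    Subtype.val_injective.eq_iff.trans e.symm.injective.eq_iff
  change (G.w i j - if (e.symm i : G.verts) = e.symm j then _ else 0) -
      (G.w i x - if (e.symm i : G.verts) = x' then _ else 0) *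
        (G.w x j - if x' = e.symm j then _ else 0) / (G.w x x - _) =
    (G.reduce (G.verts.erase x)).w i j - if i = j then _ else 0
  rw [if_neg (e.symm i).2, if_neg (e.symm j).2.symm, if_congr hij rfl rfl,
    reduce_erase_w G hx i.2 j.2]
  have h₁ : G.w x x - RatFunc.X ≠ 0 := sub_ne_zero.2 hX
  have h₂ : RatFunc.X - G.w x x ≠ 0 := sub_ne_zero.2 hX.symm
  field_simp
  ring

end WDigraph

def IsSourceOutside (G : WDigraph V) (S : Finset V) (x : V) : Prop :=
  x ∈ G.verts ∧ x ∉ S ∧ ∀ y ∈ G.verts, y ∉ S → y ≠ x → G.w y x = 0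

/-- The source is a minimal element for the transitive closure of the edge relation on
`G.verts \ S`, which is a strict order because `G.verts \ S` induces no cycles. -/
theorem IsStructuralSet.exists_isSourceOutside {G : WDigraph V} {S : Finset V}
    (hS : IsStructuralSet G S) (h : (G.verts \ S).Nonempty) : ∃ x, IsSourceOutside G S x := by
  let r : V → V → Prop := fun a b =>
    a ∈ G.verts ∧ b ∈ G.verts ∧ a ∉ S ∧ b ∉ S ∧ a ≠ b ∧ G.w a b ≠ 0
  have : IsTrans V (Relation.TransGen r) := ⟨fun _ _ _ => Relation.TransGen.trans⟩
  have : Std.Irrefl (Relation.TransGen r) := ⟨hS.2.2.1⟩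
  obtain ⟨x, hx, hmin⟩ := (Finite.wellFounded_of_trans_of_irrefl (Relation.TransGen r)).has_min
    (G.verts \ S : Finset V) h
  obtain ⟨hxG, hxS⟩ := Finset.mem_sdiff.1 hx
  refine ⟨x, hxG, hxS, fun y hyG hyS hyx => not_not.1 fun hyx' => hmin y ?_ ?_⟩
  · exact Finset.mem_sdiff.2 ⟨hyG, hyS⟩
  · exact Relation.TransGen.single ⟨hyG, hxG, hyS, hxS, hyx, hyx'⟩

theorem isBranchInterior_reduce_erase_iff {G : WDigraph V} {S : Finset V} {x u v : V}
    {int : List V} :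
    IsBranchInterior (G.reduce (G.verts.erase x)) S u v int ↔
      IsBranchInterior G S u v int ∧ x ∉ int := by
  constructor
  · rintro ⟨hint, hnd, hv⟩
    exact ⟨⟨fun y hy => ⟨Finset.mem_of_mem_erase (hint y hy).1, (hint y hy).2⟩, hnd, hv⟩,
      fun hx => Finset.ne_of_mem_erase (hint x hx).1 rfl⟩
  · rintro ⟨⟨hint, hnd, hv⟩, hx⟩
    exact ⟨fun y hy => ⟨Finset.mem_erase.2 ⟨fun h => hx (h ▸ hy), (hint y hy).1⟩, (hint y hy).2⟩,
      hnd, hv⟩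

namespace IsSourceOutside

variable {G : WDigraph V} {S : Finset V} {x u v : V}

theorem reduce_erase_w (hx : IsSourceOutside G S x) {a b : V} (ha : a ∈ G.verts.erase x)
    (haS : a ∉ S) (hb : b ∈ G.verts.erase x) : (G.reduce (G.verts.erase x)).w a b = G.w a b := by
  rw [G.reduce_erase_w hx.1 ha hb,
    hx.2.2 a (Finset.mem_of_mem_erase ha) haS (Finset.ne_of_mem_erase ha), zero_mul, zero_div,
    add_zero]

theorem isStructuralSet_reduce_erase (hx : IsSourceOutside G S x) (hS : IsStructuralSet G S) :
    IsStructuralSet (G.reduce (G.verts.erase x)) S := by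
  obtain ⟨hne, hsub, hcyc, hloop⟩ := hS
  refine ⟨hne, fun y hy => Finset.mem_erase.2 ⟨fun h => hx.2.1 (h ▸ hy), hsub hy⟩,
    fun y hy => hcyc y (Relation.TransGen.mono ?_ y y hy), fun y hy hyS => ?_⟩
  · rintro a b ⟨ha, hb, haS, hbS, hab, hw⟩
    exact ⟨Finset.mem_of_mem_erase ha, Finset.mem_of_mem_erase hb, haS, hbS, hab,
      hx.reduce_erase_w ha haS hb ▸ hw⟩
  · rw [hx.reduce_erase_w hy hyS hy]
    exact hloop y (Finset.mem_of_mem_erase hy) hyS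

theorem branchProd_eq_zero (hx : IsSourceOutside G S x) {int : List V}
    (hint : IsBranchInterior G S u v int) (hmem : x ∈ int) (hhead : int.head? ≠ some x) :
    branchProd G.w (u :: (int ++ [v])) = 0 := by
  obtain ⟨l₁, l₂, rfl⟩ := List.append_of_mem hmem
  obtain ⟨l₀, y, rfl⟩ : ∃ l₀ y, l₁ = l₀ ++ [y] := by
    rcases List.eq_nil_or_concat l₁ with rfl | h
    · simp at hhead
    · simpa using h
  obtain ⟨hyG, hyS⟩ := hint.1 y (by simp)
  have hyx : y ≠ x := by
    have := hint.2.1.sublist (List.IsInfix.sublist (l₁ := [y, x]) ⟨u :: l₀, l₂, by simp⟩)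
    simpa using this
  refine branchProd_eq_zero_of_not_chain fun hc => ?_
  have := hc.infix (l₁ := [y, x]) ⟨u :: l₀, l₂ ++ [v], by simp⟩
  exact List.isChain_pair.1 this (hx.2.2 y hyG hyS hyx)

theorem branchProd_reduce_erase (hx : IsSourceOutside G S x) {int : List V}
    (hu : u ∈ G.verts.erase x) (hv : v ∈ G.verts.erase x)
    (hint : IsBranchInterior (G.reduce (G.verts.erase x)) S u v int) :
    branchProd (G.reduce (G.verts.erase x)).w (u :: (int ++ [v])) =
      branchProd G.w (u :: (int ++ [v])) + branchProd G.w (u :: x :: (int ++ [v])) := by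
  cases int with
  | nil => exact G.reduce_erase_w hx.1 hu hv
  | cons y t =>
    have hagree : ∀ a ∈ y :: t, ∀ b ∈ y :: (t ++ [v]),
        (G.reduce (G.verts.erase x)).w a b = G.w a b := by
      intro a ha b hb
      refine hx.reduce_erase_w (hint.1 a ha).1 (hint.1 a ha).2 ?_
      rw [← List.cons_append] at hb
      rcases List.mem_append.1 hb with hb | hb
      · exact (hint.1 b hb).1
      · exact List.mem_singleton.1 hb ▸ hv
    simp only [List.cons_append]
    have ht : t ++ [v] ≠ [] := by simp
    rw [branchProd_cons_cons _ u y ht, branchProd_cons_cons _ u y ht,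
      branchProd_cons_cons G.w u x (List.cons_ne_nil y _), branchProd_cons_cons G.w x y ht,
      branchProd_congr (by rwa [← List.cons_append, List.dropLast_concat]),
      hagree y List.mem_cons_self y List.mem_cons_self,
      G.reduce_erase_w hx.1 hu (hint.1 y (by simp)).1]
    ring

theorem isBranchInterior_cons_iff (hx : IsSourceOutside G S x) (hu : u ∈ S) (hv : v ∈ S)
    {int : List V} :
    IsBranchInterior G S u v (x :: int) ↔
      IsBranchInterior (G.reduce (G.verts.erase x)) S u v int := by
  have hux : u ≠ x := fun h => hx.2.1 (h ▸ hu)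
  have hvx : v ≠ x := fun h => hx.2.1 (h ▸ hv)
  rw [isBranchInterior_reduce_erase_iff]
  simp only [IsBranchInterior, List.mem_cons, forall_eq_or_imp, List.nodup_cons, not_or]
  constructor
  · rintro ⟨⟨-, hint⟩, ⟨⟨-, hut⟩, hxt, hnd⟩, -, hvt⟩
    exact ⟨⟨hint, ⟨hut, hnd⟩, hvt⟩, hxt⟩
  · rintro ⟨⟨hint, ⟨hut, hnd⟩, hvt⟩, hxt⟩
    exact ⟨⟨⟨hx.1, hx.2.1⟩, hint⟩, ⟨⟨hux, hut⟩, hxt, hnd⟩, hvx, hvt⟩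

theorem reduce_reduce_erase (hx : IsSourceOutside G S x) (hSG : S ⊆ G.verts) :
    (G.reduce (G.verts.erase x)).reduce S = G.reduce S := by
  have hS' : S ⊆ G.verts.erase x := fun y hy =>
    Finset.mem_erase.2 ⟨fun h => hx.2.1 (h ▸ hy), hSG hy⟩
  refine WDigraph.ext rfl (funext₂ fun u v => ?_)
  by_cases huv : u ∈ S ∧ v ∈ S
  swap
  · rw [WDigraph.reduce_w_eq_zero _ (not_and_or.1 huv),
      WDigraph.reduce_w_eq_zero _ (not_and_or.1 huv)]
  obtain ⟨hu, hv⟩ := huv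
  set I := {int | IsBranchInterior G S u v int}
  set I' := {int | IsBranchInterior (G.reduce (G.verts.erase x)) S u v int}
  set f : List V → RatFunc ℂ := fun int => branchProd G.w (u :: (int ++ [v]))
  have hI' : I' = I \ {int | x ∈ int} := by
    ext int
    exact isBranchInterior_reduce_erase_iff
  have hcons : ∑ᶠ int ∈ I', f (x :: int) = ∑ᶠ int ∈ I ∩ {int | x ∈ int}, f int := by
    rw [← finsum_mem_image List.cons_injective.injOn]
    refine finsum_mem_inter_support_eq' _ _ _ fun int hint => ⟨?_, ?_⟩
    · rintro ⟨t, ht, rfl⟩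
      exact ⟨(hx.isBranchInterior_cons_iff hu hv).2 ht, List.mem_cons_self⟩
    · rintro ⟨hI, hmem⟩
      obtain ⟨t, rfl⟩ := List.head?_eq_some_iff.1
        (not_not.1 fun h => hint (hx.branchProd_eq_zero hI hmem h))
      exact ⟨t, (hx.isBranchInterior_cons_iff hu hv).1 hI, rfl⟩
  rw [WDigraph.reduce_w _ hu hv, WDigraph.reduce_w _ hu hv]
  calc ∑ᶠ int ∈ I', branchProd (G.reduce (G.verts.erase x)).w (u :: (int ++ [v]))
      = ∑ᶠ int ∈ I', (f int + f (x :: int)) :=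
        finsum_mem_congr rfl fun int h => hx.branchProd_reduce_erase (hS' hu) (hS' hv) h
    _ = ∑ᶠ int ∈ I', f int + ∑ᶠ int ∈ I', f (x :: int) :=
        finsum_mem_add_distrib (finite_setOf_isBranchInterior _ _ _ _)
    _ = ∑ᶠ int ∈ I, f int := by
        rw [hcons, hI', add_comm,
          finsum_mem_inter_add_sdiff _ (finite_setOf_isBranchInterior _ _ _ _)]

end IsSourceOutside

theorem IsStructuralSet.charDet_eq {G : WDigraph V} {S : Finset V} (hS : IsStructuralSet G S) :
    G.charDet = (∏ y ∈ G.verts \ S, (G.w y y - RatFunc.X)) * (G.reduce S).charDet := by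
  induction hn : (G.verts \ S).card generalizing G with
  | zero =>
    have hSG : S = G.verts := hS.2.1.antisymm (Finset.sdiff_eq_empty_iff_subset.1
      (Finset.card_eq_zero.1 hn))
    rw [Finset.card_eq_zero.1 hn, Finset.prod_empty, one_mul, hSG, G.charDet_reduce_verts]
  | succ n ih =>
    obtain ⟨x, hx⟩ := hS.exists_isSourceOutside (Finset.card_pos.1 (by omega))
    have hxS : x ∈ G.verts \ S := Finset.mem_sdiff.2 ⟨hx.1, hx.2.1⟩
    have hverts : (G.reduce (G.verts.erase x)).verts \ S = (G.verts \ S).erase x :=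
      Finset.erase_sdiff_comm _ _ _
    rw [G.charDet_eq_mul_charDet_reduce_erase hx.1 (hS.2.2.2 x hx.1 hx.2.1),
      ih (hx.isStructuralSet_reduce_erase hS)
        (by rw [hverts, Finset.card_erase_of_mem hxS, hn]; rfl),
      hx.reduce_reduce_erase hS.2.1, hverts, ← Finset.mul_prod_erase _ _ hxS, ← mul_assoc]
    congr 2
    refine Finset.prod_congr rfl fun y hy => ?_
    obtain ⟨hyx, hyG, hyS⟩ := Finset.mem_erase.1 hy |>.imp_right Finset.mem_sdiff.1
    have hy' : y ∈ G.verts.erase x := Finset.mem_erase.2 ⟨hyx, hyG⟩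
    rw [hx.reduce_erase_w hy' hyS hy']

theorem isUnitAt_loop_sub_X {G : WDigraph V} {S : Finset V} {y : V} {z : ℂ}
    (hy : y ∈ G.verts \ S) (hz : z ∉ NSet G S) : (G.w y y - RatFunc.X).IsUnitAt z := by
  obtain ⟨hyG, hyS⟩ := Finset.mem_sdiff.1 hy
  rw [← neg_sub]
  exact (RatFunc.isUnitAt_X_sub (fun h => hz ⟨y, hyG, hyS, Or.inl h⟩)
    (fun h => hz ⟨y, hyG, hyS, Or.inr h⟩)).neg

theorem IsStructuralSet.filter_spec_eq {G : WDigraph V} {S : Finset V}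
    (hS : IsStructuralSet G S) {N : Set ℂ} (hN : NSet G S ⊆ N) :
    G.spec.filter (· ∉ N) = (G.reduce S).spec.filter (· ∉ N) := by
  rw [WDigraph.spec, hS.charDet_eq]
  exact RatFunc.filter_roots_num_mul (fun z hz => RatFunc.isUnitAt_prod _ fun y hy =>
    isUnitAt_loop_sub_X hy fun h => hz (hN h)) _

theorem WDigraph.Isom.charDet_eq {V₁ : Type*} [Fintype V₁] [DecidableEq V₁]
    {V₂ : Type*} [Fintype V₂] [DecidableEq V₂] {G : WDigraph V₁} {H : WDigraph V₂}
    (h : G.Isom H) : G.charDet = H.charDet := by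
  obtain ⟨ρ, hρ⟩ := h
  unfold WDigraph.charDet
  rw [← Matrix.det_reindex_self ρ]
  congr 1
  ext i j
  simp only [Matrix.reindex_apply, Matrix.submatrix_apply, Matrix.of_apply, ← hρ,
    Equiv.apply_symm_apply, ρ.symm.injective.eq_iff]

theorem spec_diff_of_common_reduction_general
    {V₁ : Type*} [Fintype V₁] [DecidableEq V₁] {V₂ : Type*} [Fintype V₂] [DecidableEq V₂]
    (G : WDigraph V₁) (H : WDigraph V₂)
    (S : Finset V₁) (T : Finset V₂)
    (hS : IsStructuralSet G S) (hT : IsStructuralSet H T)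
    (hiso : WDigraph.Isom (G.reduce S) (H.reduce T)) :
    SpecDiffAtMost G.spec H.spec (NSet G S ∪ NSet H T) := by
  rw [SpecDiffAtMost, hS.filter_spec_eq Set.subset_union_left,
    hT.filter_spec_eq Set.subset_union_right, WDigraph.spec, WDigraph.spec, hiso.charDet_eq]

/-- **Corollary.** If `G, H ∈ 𝔾` have a reduction in common via the structural sets
`S` and `T` respectively, then `σ(G)` and `σ(H)` differ at most by
`N(G;S) ∪ N(H;T)`. -/
theorem spec_diff_of_common_reduction
    {V₁ : Type*} [Fintype V₁] [DecidableEq V₁] {V₂ : Type*} [Fintype V₂] [DecidableEq V₂]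
    (G : WDigraph V₁) (H : WDigraph V₂) (hG : G.Wf) (hH : H.Wf)
    (S : Finset V₁) (T : Finset V₂)
    (hS : IsStructuralSet G S) (hT : IsStructuralSet H T)
    (hiso : WDigraph.Isom (G.reduce S) (H.reduce T)) :
    SpecDiffAtMost G.spec H.spec (NSet G S ∪ NSet H T) :=
  spec_diff_of_common_reduction_general G H S T hS hT hiso
end
end

section
/- Let G be a simple graph with vertex set V and let S ⊆ V be a nonempty set such that S̄ induces no cycles in G. Then S is a structural set of L(G) and σ(L(G)) and σ(R_S(L(G))) differ at most by N(L(G);S); similarly, S is a structural set of 𝓛(G) and σ(𝓛(G)) and σ(R_S(𝓛(G))) differ at most by N(𝓛(G);S). -/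
open scoped Classical

noncomputable section

variable {V : Type*} [Fintype V] [DecidableEq V]

/-- The weighted digraph `L(G)` in `𝔾` whose adjacency matrix is the combinatorial
Laplacian matrix `M_L(G)` of the simple graph `G`. -/
def lapDigraph (Γ : SimpleGraph V) [DecidableRel Γ.Adj] : WDigraph V where
  verts := Finset.univ
  w := fun i j =>
    if i = j then (Γ.degree i : RatFunc ℂ)
    else if Γ.Adj i j then -1 else 0

/-- The weighted digraph `𝓛(G)` in `𝔾` whose adjacency matrix is the normalized
Laplacian matrix `M_𝓛(G)` of the simple graph `G`. -/
def normLapDigraph (Γ : SimpleGraph V) [DecidableRel Γ.Adj] : WDigraph V where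
  verts := Finset.univ
  w := fun i j =>
    if i = j then (if Γ.degree i ≠ 0 then 1 else 0)
    else if Γ.Adj i j then
      RatFunc.C (-(1 / (Real.sqrt ((Γ.degree i : ℝ) * (Γ.degree j : ℝ)) : ℂ)))
    else 0

/-!
Since `Γ` is undirected, an edge between two vertices outside `S` would give a cycle
`a → b → a`; so `S̄` is independent and the `S̄`-block of `M - λI` is the diagonal matrix
`diag (ω(e_xx) - λ)`. Every branch then has at most one interior vertex, so
`R_S(G)` has weights `ω(e_uv) + ∑_{x ∉ S} ω(e_ux) ω(e_xv) / (λ - ω(e_xx))`, i.e. `R_S(G) - λI` is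
the Schur complement of that block and
`det (M - λI) = ∏_{x ∉ S} (ω(e_xx) - λ) · det (R_S(G) - λI)`.
The weights are constants, so the left side is a polynomial, and the two spectra can only differ
at roots of the product (which also bound the denominator of the right-hand determinant); these
lie in `N(G;S)`.
-/

theorem RatFunc.X_sub_C_ne_zero {K : Type*} [Field K] (z : K) :
    (RatFunc.X : RatFunc K) - RatFunc.C z ≠ 0 := by
  rw [← RatFunc.algebraMap_X, ← RatFunc.algebraMap_C, ← map_sub]
  exact RatFunc.algebraMap_ne_zero (Polynomial.X_sub_C_ne_zero z)

open Polynomial in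
theorem Polynomial.filter_roots_eq_of_algebraMap_eq_mul {K : Type*} [Field K] {g P : K[X]}
    {f : RatFunc K} (hg : g ≠ 0) (hP : P ≠ 0)
    (h : algebraMap K[X] (RatFunc K) g = algebraMap K[X] (RatFunc K) P * f) {N : Set K}
    (hN : ∀ z, P.IsRoot z → z ∈ N) :
    g.roots.filter (· ∉ N) = f.num.roots.filter (· ∉ N) := by
  have hf : f ≠ 0 := by
    rintro rfl
    exact RatFunc.algebraMap_ne_zero hg (by rw [h, mul_zero])
  have hfg : f = algebraMap K[X] (RatFunc K) g / algebraMap K[X] (RatFunc K) P := by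
    rw [eq_div_iff (RatFunc.algebraMap_ne_zero hP), h, mul_comm]
  have hcross : f.num * P = g * f.denom := (RatFunc.num_mul_eq_mul_denom_iff hP).2 hfg
  have hdenom : ∀ z, f.denom.IsRoot z → z ∈ N := fun z hz =>
    hN z (hz.dvd (hfg ▸ RatFunc.denom_div_dvd g P))
  have hroots : f.num.roots + P.roots = g.roots + f.denom.roots := by
    rw [← roots_mul (mul_ne_zero (RatFunc.num_ne_zero hf) hP),
      ← roots_mul (mul_ne_zero hg (RatFunc.denom_ne_zero f)), hcross]
  have hP₀ : P.roots.filter (· ∉ N) = 0 :=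
    Multiset.filter_eq_nil.2 fun z hz hzN => hzN (hN z (isRoot_of_mem_roots hz))
  have hdenom₀ : f.denom.roots.filter (· ∉ N) = 0 :=
    Multiset.filter_eq_nil.2 fun z hz hzN => hzN (hdenom z (isRoot_of_mem_roots hz))
  have hfilter := congrArg (Multiset.filter (· ∉ N)) hroots
  rwa [Multiset.filter_add, Multiset.filter_add, hP₀, hdenom₀, add_zero, add_zero, eq_comm]
    at hfilter

theorem SimpleGraph.not_adj_of_forall_not_transGen {α : Type*} {Γ : SimpleGraph α}
    {S : Finset α} (hcyc : ∀ v, ¬ Relation.TransGen (fun a b => a ∉ S ∧ b ∉ S ∧ Γ.Adj a b) v v)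
    {a b : α} (ha : a ∉ S) (hb : b ∉ S) : ¬ Γ.Adj a b := fun h =>
  hcyc a (.tail (.single ⟨ha, hb, h⟩) ⟨hb, ha, h.symm⟩)

namespace WDigraph

open Polynomial Matrix

variable {G : WDigraph V} {S : Finset V}

theorem isBranch_pair {u v : V} (hu : u ∈ S) (hv : v ∈ S) (h : G.w u v ≠ 0) :
    IsBranch G S u v [u, v] :=
  ⟨hu, hv, [], rfl, by simp, by simp, by simp, List.isChain_pair.2 h⟩

theorem isBranch_triple {u v x : V} (hu : u ∈ S) (hv : v ∈ S) (hxG : x ∈ G.verts) (hx : x ∉ S)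
    (hux : G.w u x ≠ 0) (hxv : G.w x v ≠ 0) : IsBranch G S u v [u, x, v] := by
  refine ⟨hu, hv, [x], rfl, by simpa using ⟨hxG, hx⟩, ?_, ?_, ?_⟩
  · simpa using fun h : u = x => hx (h ▸ hu)
  · simpa using fun h : v = x => hx (h ▸ hv)
  · exact List.isChain_cons_cons.2 ⟨hux, List.isChain_pair.2 hxv⟩

theorem IsBranch.eq_pair_or_eq_triple
    (hS : ∀ a b, a ∉ S → b ∉ S → a ≠ b → G.w a b = 0) {u v : V} {β : List V}
    (h : IsBranch G S u v β) : β = [u, v] ∨ ∃ x ∉ S, β = [u, x, v] := by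
  obtain ⟨-, -, int, rfl, hint, hnd, -, hch⟩ := h
  match int, hint, hnd, hch with
  | [], _, _, _ => exact .inl rfl
  | [x], hint, _, _ => exact .inr ⟨x, (hint x (by simp)).2, rfl⟩
  | x :: y :: rest, hint, hnd, hch =>
    have hxy : x ≠ y := fun h => by simp [h] at hnd
    have hw : G.w x y ≠ 0 := (List.isChain_cons_cons.1 (List.isChain_cons_cons.1 hch).2).1
    exact (hw (hS x y (hint x (by simp)).2 (hint y (by simp)).2 hxy)).elim

theorem branchProd_triple {α : Type*} (w : α → α → RatFunc ℂ) (a b c : α) :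
    branchProd w [a, b, c] = w a b * w b c / (RatFunc.X - w b b) := rfl

theorem reduce_w_of_compl_indep (hV : G.verts = Finset.univ)
    (hS : ∀ a b, a ∉ S → b ∉ S → a ≠ b → G.w a b = 0) {u v : V} (hu : u ∈ S) (hv : v ∈ S) :
    (G.reduce S).w u v =
      G.w u v + ∑ x : {x // x ∉ S}, G.w u x * G.w x v / (RatFunc.X - G.w x x) := by
  let f : Option {x // x ∉ S} → List V := fun o => o.elim [u, v] fun x => [u, x, v]
  have hf : Function.Injective f := by
    rintro (_ | x) (_ | y) h <;> simp only [f, Option.elim, List.cons.injEq, List.nil_eq,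
      reduceCtorEq, and_false, and_true, true_and] at h ⊢
    exact congrArg some (Subtype.ext h)
  have hsupp : ∀ β ∈ Function.support (branchProd G.w),
      β ∈ {β | IsBranch G S u v β} ↔ β ∈ Set.range f := by
    intro β hβ
    constructor
    · intro h
      rcases IsBranch.eq_pair_or_eq_triple hS h with rfl | ⟨x, hx, rfl⟩
      exacts [⟨none, rfl⟩, ⟨some ⟨x, hx⟩, rfl⟩]
    · rintro ⟨_ | ⟨x, hx⟩, rfl⟩
      · exact isBranch_pair hu hv hβ
      · simp only [f, Option.elim, Function.mem_support, branchProd_triple, div_ne_zero_iff,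
          mul_ne_zero_iff] at hβ
        exact isBranch_triple hu hv (hV ▸ Finset.mem_univ x) hx hβ.1.1 hβ.1.2
  calc (G.reduce S).w u v = ∑ᶠ β ∈ Set.range f, branchProd G.w β :=
        finsum_mem_inter_support_eq' _ _ _ hsupp
    _ = ∑ o, branchProd G.w (f o) := by
        rw [finsum_mem_range hf, finsum_eq_sum_of_fintype]
    _ = _ := Fintype.sum_option _

theorem charDet_eq_prod_mul_charDet_reduce (hV : G.verts = Finset.univ)
    (hS : ∀ a b, a ∉ S → b ∉ S → a ≠ b → G.w a b = 0)
    (hX : ∀ x ∉ S, RatFunc.X - G.w x x ≠ 0) :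
    G.charDet = (∏ x : {x // x ∉ S}, (G.w x x - RatFunc.X)) * (G.reduce S).charDet := by
  let ε : {x // x ∈ S} ⊕ {x // x ∉ S} ≃ G.verts :=
    (Equiv.sumCompl (· ∈ S)).trans (Equiv.subtypeUnivEquiv fun x => hV ▸ Finset.mem_univ x).symm
  have hε : ∀ s, (ε s : V) = Sum.elim Subtype.val Subtype.val s := by rintro (_ | _) <;> rfl
  let d : {x // x ∉ S} → RatFunc ℂ := fun x => G.w x x - RatFunc.X
  let A : Matrix {x // x ∈ S} {x // x ∈ S} (RatFunc ℂ) :=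
    of fun i j => G.w i j - if i = j then RatFunc.X else 0
  let B : Matrix {x // x ∈ S} {x // x ∉ S} (RatFunc ℂ) := of fun i j => G.w i j
  let C : Matrix {x // x ∉ S} {x // x ∈ S} (RatFunc ℂ) := of fun i j => G.w i j
  have hblocks : (of fun i j : G.verts => G.w i j - if i = j then RatFunc.X else 0).submatrix ε ε =
      fromBlocks A B C (diagonal d) := by
    ext (i | i) (j | j) <;>
      simp only [submatrix_apply, of_apply, ε.apply_eq_iff_eq, hε, Sum.elim_inl, Sum.elim_inr,
        fromBlocks_apply₁₁, fromBlocks_apply₁₂, fromBlocks_apply₂₁, fromBlocks_apply₂₂,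
        Sum.inl.injEq, Sum.inr.injEq, reduceCtorEq, if_false, sub_zero, A, B, C, diagonal_apply]
    rcases eq_or_ne i j with rfl | hij
    · simp [d]
    · simp [hij, hS i j i.2 j.2 (Subtype.coe_injective.ne hij)]
  have hd : ∀ x, d x * (d x)⁻¹ = 1 := fun x =>
    mul_inv_cancel₀ fun h => hX x x.2 (by rw [← neg_sub, neg_eq_zero]; exact h)
  let _ : Invertible (diagonal d) :=
    ⟨diagonal fun x => (d x)⁻¹,
      by rw [diagonal_mul_diagonal, ← diagonal_one]; simp only [mul_comm _ (d _), hd],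
      by rw [diagonal_mul_diagonal, ← diagonal_one]; simp only [hd]⟩
  have hschur : A - B * ⅟(diagonal d) * C =
      of fun i j : {x // x ∈ S} => (G.reduce S).w i j - if i = j then RatFunc.X else 0 := by
    have hinv : ⅟(diagonal d) = diagonal fun x => (d x)⁻¹ := rfl
    have hsum : ∀ i j : {x // x ∈ S}, ∑ x, B i x * (d x)⁻¹ * C x j =
        -∑ x : {x // x ∉ S}, G.w i x * G.w x j / (RatFunc.X - G.w x x) := fun i j => by
      rw [← Finset.sum_neg_distrib]
      refine Finset.sum_congr rfl fun x _ => ?_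
      simp only [B, C, d, of_apply]
      rw [← neg_sub RatFunc.X]
      -- `ring` normalizes inside the inverse unless the difference is hidden
      generalize RatFunc.X - G.w x x = e
      ring
    ext i j
    rw [of_apply, reduce_w_of_compl_indep hV hS i.2 j.2, hinv, Matrix.sub_apply, mul_apply]
    simp only [mul_diagonal, hsum, A, of_apply]
    ring
  rw [charDet, ← det_submatrix_equiv_self ε, hblocks, det_fromBlocks₂₂, det_diagonal, hschur]
  rfl

theorem charDet_eq_algebraMap_det {c : V → V → ℂ} (hc : ∀ u v, G.w u v = RatFunc.C (c u v)) :
    G.charDet =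
      algebraMap ℂ[X] (RatFunc ℂ) (-charmatrix (of fun i j : G.verts => c i j)).det := by
  rw [RingHom.map_det, charDet]
  congr 1
  ext i j
  by_cases h : i = j <;> simp [hc, h]

theorem isStructuralSet_of_compl_indep (hV : G.verts = Finset.univ) (hne : S.Nonempty)
    (hS : ∀ a b, a ∉ S → b ∉ S → a ≠ b → G.w a b = 0) (hloop : ∀ v ∉ S, G.w v v ≠ RatFunc.X) :
    IsStructuralSet G S := by
  refine ⟨hne, hV ▸ Finset.subset_univ S, fun v h => ?_, fun v _ hv => hloop v hv⟩
  obtain ⟨b, ⟨-, -, hv, hb, hvb, hw⟩, -⟩ := Relation.TransGen.head'_iff.1 h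
  exact hw (hS v b hv hb hvb)

theorem specDiffAtMost_reduce_of_compl_indep (hV : G.verts = Finset.univ) {c : V → V → ℂ}
    (hc : ∀ u v, G.w u v = RatFunc.C (c u v)) (hS : ∀ a b, a ∉ S → b ∉ S → a ≠ b → G.w a b = 0) :
    SpecDiffAtMost G.spec (G.reduce S).spec (NSet G S) := by
  set P : ℂ[X] := ∏ x : {x // x ∉ S}, (C (c x x) - X)
  have hP : P ≠ 0 := Finset.prod_ne_zero_iff.2 fun x _ => by
    rw [← neg_sub]; exact neg_ne_zero.2 (X_sub_C_ne_zero _)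
  have hPmap : algebraMap ℂ[X] (RatFunc ℂ) P = ∏ x : {x // x ∉ S}, (G.w x x - RatFunc.X) := by
    simp [P, hc, RatFunc.algebraMap_C, RatFunc.algebraMap_X]
  have hNSet : ∀ z, P.IsRoot z → z ∈ NSet G S := by
    intro z hz
    obtain ⟨x, -, hx⟩ := Finset.prod_eq_zero_iff.1 (by simpa [P, eval_prod] using hz)
    refine ⟨x, hV ▸ Finset.mem_univ _, x.2, Or.inl ?_⟩
    rw [hc, ← RatFunc.algebraMap_C, ← RatFunc.algebraMap_X, ← map_sub, RatFunc.num_algebraMap]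
    simpa [sub_eq_zero, eq_comm] using hx
  have hg : (-charmatrix (of fun i j : G.verts => c i j)).det ≠ 0 := by
    rw [det_neg]
    exact mul_ne_zero (pow_ne_zero _ (neg_ne_zero.2 one_ne_zero)) (charpoly_monic _).ne_zero
  have hfactor := charDet_eq_prod_mul_charDet_reduce hV hS fun x _ =>
    hc x x ▸ RatFunc.X_sub_C_ne_zero _
  rw [charDet_eq_algebraMap_det hc, ← hPmap] at hfactor
  unfold SpecDiffAtMost spec
  rw [charDet_eq_algebraMap_det hc, RatFunc.num_algebraMap]
  exact filter_roots_eq_of_algebraMap_eq_mul hg hP hfactor hNSet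

theorem isStructuralSet_and_specDiffAtMost_reduce (Γ : SimpleGraph V) {G : WDigraph V}
    {S : Finset V} (hV : G.verts = Finset.univ) (hconst : ∀ u v, G.w u v ∈ Set.range RatFunc.C)
    (hadj : ∀ a b, a ≠ b → ¬ Γ.Adj a b → G.w a b = 0) (hne : S.Nonempty)
    (hcyc : ∀ v, ¬ Relation.TransGen (fun a b => a ∉ S ∧ b ∉ S ∧ Γ.Adj a b) v v) :
    IsStructuralSet G S ∧ SpecDiffAtMost G.spec (G.reduce S).spec (NSet G S) := by
  choose c hc using hconst
  have hS : ∀ a b, a ∉ S → b ∉ S → a ≠ b → G.w a b = 0 := fun a b ha hb hab =>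
    hadj a b hab (SimpleGraph.not_adj_of_forall_not_transGen hcyc ha hb)
  have hloop : ∀ v ∉ S, G.w v v ≠ RatFunc.X := fun v _ h =>
    RatFunc.X_sub_C_ne_zero (c v v) (by rw [hc, h, sub_self])
  exact ⟨isStructuralSet_of_compl_indep hV hne hS hloop,
    specDiffAtMost_reduce_of_compl_indep hV (fun u v => (hc u v).symm) hS⟩

end WDigraph

section Laplacians

variable (Γ : SimpleGraph V) [DecidableRel Γ.Adj]

theorem lapDigraph_w_mem_range_C (u v : V) : (lapDigraph Γ).w u v ∈ Set.range RatFunc.C := by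
  simp only [lapDigraph]
  split_ifs
  exacts [⟨_, map_natCast _ _⟩, ⟨-1, by simp⟩, ⟨0, map_zero _⟩]

theorem lapDigraph_w_eq_zero {u v : V} (huv : u ≠ v) (hadj : ¬ Γ.Adj u v) :
    (lapDigraph Γ).w u v = 0 := by
  simp [lapDigraph, huv, hadj]

theorem normLapDigraph_w_mem_range_C (u v : V) :
    (normLapDigraph Γ).w u v ∈ Set.range RatFunc.C := by
  simp only [normLapDigraph]
  split_ifs
  exacts [⟨1, map_one _⟩, ⟨0, map_zero _⟩, ⟨_, rfl⟩, ⟨0, map_zero _⟩]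

theorem normLapDigraph_w_eq_zero {u v : V} (huv : u ≠ v) (hadj : ¬ Γ.Adj u v) :
    (normLapDigraph Γ).w u v = 0 := by
  simp [normLapDigraph, huv, hadj]

end Laplacians

/-- **Theorem 2.** Let `G` be a simple graph and `S` a nonempty vertex set whose
complement induces no cycles in `G`. Then `S ∈ st(L(G))` and `σ(L(G))`,
`σ(R_S(L(G)))` differ at most by `N(L(G);S)`; similarly `S ∈ st(𝓛(G))` and
`σ(𝓛(G))`, `σ(R_S(𝓛(G)))` differ at most by `N(𝓛(G);S)`. -/
theorem laplacian_reduction (Γ : SimpleGraph V) [DecidableRel Γ.Adj]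
    (S : Finset V) (hne : S.Nonempty)
    (hcyc : ∀ v, ¬ Relation.TransGen (fun a b => a ∉ S ∧ b ∉ S ∧ Γ.Adj a b) v v) :
    (IsStructuralSet (lapDigraph Γ) S ∧
      SpecDiffAtMost (lapDigraph Γ).spec ((lapDigraph Γ).reduce S).spec
        (NSet (lapDigraph Γ) S)) ∧
    (IsStructuralSet (normLapDigraph Γ) S ∧
      SpecDiffAtMost (normLapDigraph Γ).spec ((normLapDigraph Γ).reduce S).spec
        (NSet (normLapDigraph Γ) S)) :=
  ⟨WDigraph.isStructuralSet_and_specDiffAtMost_reduce Γ rfl (lapDigraph_w_mem_range_C Γ)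
      (fun _ _ => lapDigraph_w_eq_zero Γ) hne hcyc,
    WDigraph.isStructuralSet_and_specDiffAtMost_reduce Γ rfl (normLapDigraph_w_mem_range_C Γ)
      (fun _ _ => normLapDigraph_w_eq_zero Γ) hne hcyc⟩
end
end
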